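/- Let M ≥ 6 be an even integer and N1 ≥ 2. Define the Co-TSAULAs position set P = {M/2 + kM : 0 ≤ k ≤ N1−1} ∪ {N1·M − M/2 + 2j : 1 ≤ j ≤ M/2 − 1} ∪ {−N1·M − M/2 + 1} ∪ {N1·M + M/2 − 1 + 2j : 1 ≤ j ≤ M/2 − 1} ∪ {N1·M + 3M/2 − 2}. Then the sum-difference co-array SDC = {u−v} ∪ {u+v} ∪ {−u−v} (over u,v ∈ P) contains every integer n with |n| ≤ 2·N1·M + 3M − 4. -/
import Mathlib


def diffSet (P : Set ℤ) : Set ℤ := {d | ∃ u ∈ P, ∃ v ∈ P, d = u - v}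

def sumSet (P : Set ℤ) : Set ℤ := {s | ∃ u ∈ P, ∃ v ∈ P, s = u + v}

def SDC (P : Set ℤ) : Set ℤ :=
  diffSet P ∪ sumSet P ∪ {s | ∃ u ∈ P, ∃ v ∈ P, s = -u - v}

noncomputable def weight (P : Set ℤ) (f : ℤ) : ℕ :=
  Set.ncard {p : ℤ × ℤ | p.1 ∈ P ∧ p.2 ∈ P ∧ p.1 - p.2 = f}

def AULAs (M N1 : ℤ) : Set ℤ :=
  {x | ∃ k, 0 ≤ k ∧ k ≤ N1 - 1 ∧ x = k * M} ∪
  {x | ∃ j, 1 ≤ j ∧ j ≤ M / 2 ∧ x = N1 * M - M / 2 - 1 + j} ∪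
  {x | ∃ j, 1 ≤ j ∧ j ≤ M / 2 - 1 ∧ x = N1 * M + j}

def SAULAs (M N1 : ℤ) : Set ℤ :=
  {x | ∃ k, 0 ≤ k ∧ k ≤ N1 - 1 ∧ x = M / 2 + k * M} ∪
  {x | ∃ j, 1 ≤ j ∧ j ≤ M / 2 ∧ x = N1 * M - 1 + j} ∪
  {x | ∃ j, 1 ≤ j ∧ j ≤ M / 2 - 1 ∧ x = N1 * M + M / 2 + j}

def TSAULAs (M N1 : ℤ) : Set ℤ :=
  {x | ∃ k, 0 ≤ k ∧ k ≤ N1 - 1 ∧ x = M / 2 + k * M} ∪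
  {x | ∃ j, 1 ≤ j ∧ j ≤ M / 2 - 1 ∧ x = N1 * M - M / 2 + 2 * j} ∪
  {-(N1 * M) - M / 2 + 1} ∪
  {x | ∃ j, 1 ≤ j ∧ j ≤ M / 2 - 1 ∧ x = N1 * M + M / 2 - 1 + 2 * j}

def CoTSAULAs (M N1 : ℤ) : Set ℤ :=
  TSAULAs M N1 ∪ {N1 * M + 3 * M / 2 - 2}

lemma sdc_diff {P : Set ℤ} {u v n : ℤ} (hu : u ∈ P) (hv : v ∈ P) (h : n = u - v) :
    n ∈ SDC P :=
  Set.mem_union_left _ (Set.mem_union_left _ ⟨u, hu, v, hv, h⟩)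

lemma sdc_sum {P : Set ℤ} {u v n : ℤ} (hu : u ∈ P) (hv : v ∈ P) (h : n = u + v) :
    n ∈ SDC P :=
  Set.mem_union_left _ (Set.mem_union_right _ ⟨u, hu, v, hv, h⟩)

lemma sdc_nsum {P : Set ℤ} {u v n : ℤ} (hu : u ∈ P) (hv : v ∈ P) (h : n = -u - v) :
    n ∈ SDC P :=
  Set.mem_union_right _ ⟨u, hu, v, hv, h⟩

lemma sdc_neg {P : Set ℤ} {n : ℤ} (h : n ∈ SDC P) : -n ∈ SDC P := by
  rcases h with (⟨u,hu,v,hv,h⟩|⟨u,hu,v,hv,h⟩)|⟨u,hu,v,hv,h⟩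
  · exact sdc_diff hv hu (by omega)
  · exact sdc_nsum hu hv (by omega)
  · exact sdc_sum hu hv (by omega)

lemma memA (M N1 m k : ℤ) (hm : M = 2*m) (h0 : 0 ≤ k) (h1 : k ≤ N1 - 1) :
    m + 2*m*k ∈ CoTSAULAs M N1 := by
  subst hm
  have h2 : (2*m)/2 = (m:ℤ) := by omega
  refine Set.mem_union_left _ (Set.mem_union_left _ (Set.mem_union_left _
    (Set.mem_union_left _ ?_)))
  exact ⟨k, h0, h1, by rw [h2]; ring⟩

lemma memB (M N1 m j : ℤ) (hm : M = 2*m) (h1 : 1 ≤ j) (h2 : j ≤ m - 1) :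
    2*N1*m - m + 2*j ∈ CoTSAULAs M N1 := by
  subst hm
  have hd : (2*m)/2 = (m:ℤ) := by omega
  refine Set.mem_union_left _ (Set.mem_union_left _ (Set.mem_union_left _
    (Set.mem_union_right _ ?_)))
  exact ⟨j, h1, by omega, by rw [hd]; ring⟩

lemma memC (M N1 m : ℤ) (hm : M = 2*m) :
    -(2*N1*m) - m + 1 ∈ CoTSAULAs M N1 := by
  subst hm
  have hd : (2*m)/2 = (m:ℤ) := by omega
  refine Set.mem_union_left _ (Set.mem_union_left _ (Set.mem_union_right _ ?_))
  show _ ∈ ({_} : Set ℤ)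
  rw [Set.mem_singleton_iff, hd]; ring

lemma memD (M N1 m j : ℤ) (hm : M = 2*m) (h1 : 1 ≤ j) (h2 : j ≤ m - 1) :
    2*N1*m + m - 1 + 2*j ∈ CoTSAULAs M N1 := by
  subst hm
  have hd : (2*m)/2 = (m:ℤ) := by omega
  refine Set.mem_union_left _ (Set.mem_union_right _ ?_)
  exact ⟨j, h1, by omega, by rw [hd]; ring⟩

lemma memE (M N1 m : ℤ) (hm : M = 2*m) :
    2*N1*m + 3*m - 2 ∈ CoTSAULAs M N1 := by
  subst hm
  have hd : 3*(2*m)/2 = 3*(m:ℤ) := by omega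
  refine Set.mem_union_right _ ?_
  show _ ∈ ({_} : Set ℤ)
  rw [Set.mem_singleton_iff, hd]; ring

lemma key (M N1 m : ℤ) (hm : M = 2*m) (hm3 : 3 ≤ m) (hN1 : 2 ≤ N1) (n : ℤ)
    (h0 : 0 ≤ n) (hL : n ≤ 4*N1*m + 6*m - 4) : n ∈ SDC (CoTSAULAs M N1) := by
  obtain ⟨t, r, hn, hr0, hr1, ht0⟩ :
      ∃ t r, n = 2*m*t + r ∧ 0 ≤ r ∧ r < 2*m ∧ 0 ≤ t := by
    refine ⟨n / (2*m), n % (2*m), (Int.mul_ediv_add_emod n (2*m)).symm, ?_, ?_, ?_⟩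
    · exact Int.emod_nonneg _ (by omega)
    · exact Int.emod_lt_of_pos _ (by omega)
    · exact Int.ediv_nonneg h0 (by omega)
  have ht2 : t ≤ 2*N1 + 2 := by
    by_contra hc
    push_neg at hc
    have h1 : 2*m*(2*N1+3) ≤ 2*m*t :=
      mul_le_mul_of_nonneg_left (by omega) (by omega : (0:ℤ) ≤ 2*m)
    nlinarith
  rcases Int.even_or_odd r with ⟨j, hj⟩ | ⟨j, hj⟩
  · -- r = j + j
    subst hj
    have hjm : 0 ≤ j ∧ j ≤ m - 1 := by omega
    rcases le_or_gt j 0 with hj0 | hj1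
    · -- j = 0
      have : j = 0 := by omega
      subst this
      rcases le_or_gt t 0 with h | h
      · have : t = 0 := by omega
        subst this
        exact sdc_diff (memE M N1 m hm) (memE M N1 m hm) (by linear_combination hn)
      rcases le_or_gt t N1 with h2 | h2
      · exact sdc_sum (memA M N1 m (t-1) hm (by omega) (by omega))
          (memA M N1 m 0 hm (by omega) (by omega)) (by linear_combination hn)
      rcases le_or_gt t (2*N1-1) with h3 | h3
      · exact sdc_sum (memA M N1 m (N1-1) hm (by omega) (by omega))
          (memA M N1 m (t-N1) hm (by omega) (by omega)) (by linear_combination hn)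
      have : t = 2*N1 ∨ t = 2*N1+1 ∨ t = 2*N1+2 := by omega
      rcases this with h4 | h4 | h4 <;> subst h4
      · exact sdc_sum (memB M N1 m 1 hm (by omega) (by omega))
          (memB M N1 m (m-1) hm (by omega) (by omega)) (by linear_combination hn)
      · exact sdc_sum (memE M N1 m hm)
          (memB M N1 m 1 hm (by omega) (by omega)) (by linear_combination hn)
      · exact sdc_sum (memD M N1 m (m-1) hm (by omega) (by omega))
          (memD M N1 m 2 hm (by omega) (by omega)) (by linear_combination hn)
    · -- 1 ≤ j ≤ m-1
      rcases le_or_gt t 0 with h | h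
      · have : t = 0 := by omega
        subst this
        exact sdc_sum (memD M N1 m j hm (by omega) (by omega))
          (memC M N1 m hm) (by linear_combination hn)
      rcases le_or_gt t (N1-1) with h2 | h2
      · exact sdc_diff (memB M N1 m j hm (by omega) (by omega))
          (memA M N1 m (N1-1-t) hm (by omega) (by omega)) (by linear_combination hn)
      rcases le_or_gt t (2*N1-1) with h3 | h3
      · exact sdc_sum (memA M N1 m (t-N1) hm (by omega) (by omega))
          (memB M N1 m j hm (by omega) (by omega)) (by linear_combination hn)
      have : t = 2*N1 ∨ t = 2*N1+1 ∨ t = 2*N1+2 := by omega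
      rcases this with h4 | h4 | h4 <;> subst h4
      · rcases le_or_gt j (m-2) with h5 | h5
        · exact sdc_sum (memB M N1 m (m-1) hm (by omega) (by omega))
            (memB M N1 m (j+1) hm (by omega) (by omega)) (by linear_combination hn)
        · have : j = m - 1 := by omega
          subst this
          exact sdc_sum (memE M N1 m hm)
            (memA M N1 m (N1-1) hm (by omega) (by omega)) (by linear_combination hn)
      · rcases le_or_gt j (m-2) with h5 | h5
        · exact sdc_sum (memE M N1 m hm)
            (memB M N1 m (j+1) hm (by omega) (by omega)) (by linear_combination hn)
        · have : j = m - 1 := by omega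
          subst this
          exact sdc_sum (memD M N1 m (m-1) hm (by omega) (by omega))
            (memD M N1 m 1 hm (by omega) (by omega)) (by linear_combination hn)
      · have hjb : 2*j ≤ 2*m - 4 := by nlinarith
        rcases le_or_gt j (m-3) with h5 | h5
        · exact sdc_sum (memD M N1 m (m-1) hm (by omega) (by omega))
            (memD M N1 m (j+2) hm (by omega) (by omega)) (by linear_combination hn)
        · have : j = m - 2 := by omega
          subst this
          exact sdc_sum (memE M N1 m hm) (memE M N1 m hm) (by linear_combination hn)
  · -- r = 2*j + 1
    subst hj
    have hjm : 0 ≤ j ∧ j ≤ m - 1 := by omega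
    rcases le_or_gt j (m-2) with hjc | hjc
    · -- 0 ≤ j ≤ m-2
      rcases le_or_gt t 0 with h | h
      · have : t = 0 := by omega
        subst this
        exact sdc_diff (memE M N1 m hm)
          (memD M N1 m (m-1-j) hm (by omega) (by omega)) (by linear_combination hn)
      rcases le_or_gt t N1 with h2 | h2
      · exact sdc_diff (memD M N1 m (j+1) hm (by omega) (by omega))
          (memA M N1 m (N1-t) hm (by omega) (by omega)) (by linear_combination hn)
      rcases le_or_gt t (2*N1) with h3 | h3
      · exact sdc_sum (memA M N1 m (t-N1-1) hm (by omega) (by omega))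
          (memD M N1 m (j+1) hm (by omega) (by omega)) (by linear_combination hn)
      have : t = 2*N1+1 ∨ t = 2*N1+2 := by omega
      rcases this with h4 | h4 <;> subst h4
      · rcases le_or_gt j (m-3) with h5 | h5
        · exact sdc_sum (memB M N1 m (m-1) hm (by omega) (by omega))
            (memD M N1 m (j+2) hm (by omega) (by omega)) (by linear_combination hn)
        · have : j = m - 2 := by omega
          subst this
          exact sdc_diff (memE M N1 m hm) (memC M N1 m hm) (by linear_combination hn)
      · have hjb : 2*j ≤ 2*m - 5 := by nlinarith
        exact sdc_sum (memE M N1 m hm)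
          (memD M N1 m (j+2) hm (by omega) (by omega)) (by linear_combination hn)
    · -- j = m-1
      have : j = m - 1 := by omega
      subst this
      rcases le_or_gt t (N1-1) with h | h
      · exact sdc_nsum (memC M N1 m hm)
          (memA M N1 m (N1-1-t) hm (by omega) (by omega)) (by linear_combination hn)
      rcases le_or_gt t (2*N1-1) with h2 | h2
      · exact sdc_diff (memA M N1 m (t-N1) hm (by omega) (by omega))
          (memC M N1 m hm) (by linear_combination hn)
      have : t = 2*N1 ∨ t = 2*N1+1 ∨ t = 2*N1+2 := by omega
      rcases this with h4 | h4 | h4 <;> subst h4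
      · exact sdc_sum (memB M N1 m 1 hm (by omega) (by omega))
          (memD M N1 m (m-1) hm (by omega) (by omega)) (by linear_combination hn)
      · exact sdc_sum (memE M N1 m hm)
          (memD M N1 m 1 hm (by omega) (by omega)) (by linear_combination hn)
      · exfalso; nlinarith

theorem stmt9 (M N1 : ℤ) (hM : 6 ≤ M) (hMe : Even M) (hN1 : 2 ≤ N1) :
    ∀ n : ℤ, |n| ≤ 2 * N1 * M + 3 * M - 4 → n ∈ SDC (CoTSAULAs M N1) := by
  obtain ⟨m, hm⟩ := hMe
  have hm' : M = 2*m := by omega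
  have hm3 : 3 ≤ m := by omega
  intro n hn
  rw [abs_le] at hn
  rcases le_or_gt 0 n with h | h
  · exact key M N1 m hm' hm3 hN1 n h (by nlinarith [hn.2])
  · have h1 : (-n) ∈ SDC (CoTSAULAs M N1) :=
      key M N1 m hm' hm3 hN1 (-n) (by omega) (by nlinarith [hn.1])
    have := sdc_neg h1
    rwa [neg_neg] at this
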